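/- arXiv:2004.03122 — 7 statements merged into one kernel-verified Lean document; each statement's English description precedes it below -/
import Mathlib

section
/- For every natural number n and every partition λ = (f, g, k) of n with overline designated summands (i.e., λ ∈ S1(n)), the triple Δ(λ) belongs to S2(n). -/
/-- `S1 n`: partitions of `n` with overline designated summands, encoded as triples
`(f, g, k)` where `f g : ℕ → ℕ` are the multiplicity/designation functions on the positive
integers (we require `f 0 = g 0 = 0`), finitely supported, with `∑ i * f i = n`,
`k ≥ 1`, `f k ≥ 1`, `1 ≤ g i ≤ f i` whenever `f i ≥ 1`, and `g i = 0` whenever `f i = 0`. -/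
def S1 (n : ℕ) : Set ((ℕ → ℕ) × (ℕ → ℕ) × ℕ) :=
  {p | p.1 0 = 0 ∧ p.2.1 0 = 0 ∧
    (Function.support p.1).Finite ∧ (Function.support p.2.1).Finite ∧
    (∑ᶠ i, i * p.1 i) = n ∧
    1 ≤ p.2.2 ∧ 1 ≤ p.1 p.2.2 ∧
    (∀ i, 1 ≤ p.1 i → 1 ≤ p.2.1 i ∧ p.2.1 i ≤ p.1 i) ∧
    (∀ i, p.1 i = 0 → p.2.1 i = 0)}

/-- `S2 n`: triples `(x, y, t)` of finitely supported functions on the positive integers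
(`x 0 = y 0 = 0`) with `t ≥ 1`, `x t ≥ 1`, `x i ≠ 1` for all `i ≠ t`,
and `∑ i * (x i + y i) = n`. -/
def S2 (n : ℕ) : Set ((ℕ → ℕ) × (ℕ → ℕ) × ℕ) :=
  {p | p.1 0 = 0 ∧ p.2.1 0 = 0 ∧
    (Function.support p.1).Finite ∧ (Function.support p.2.1).Finite ∧
    1 ≤ p.2.2 ∧ 1 ≤ p.1 p.2.2 ∧
    (∀ i, i ≠ p.2.2 → p.1 i ≠ 1) ∧
    (∑ᶠ i, i * (p.1 i + p.2.1 i)) = n}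

/-- The map `Δ` sending `(f, g, k)` to `(x, y, k)`: if `f i = 0` then `x i = y i = 0`;
if `f i ≥ 1` and (`i = k` or `g i ≥ 2`) then `x i = g i`, `y i = f i - g i`;
if `f i ≥ 1`, `i ≠ k` and `g i = 1` (i.e. `g i ≤ 1`) then `x i = 0`, `y i = f i`. -/
def delta (p : (ℕ → ℕ) × (ℕ → ℕ) × ℕ) : (ℕ → ℕ) × (ℕ → ℕ) × ℕ :=
  ⟨fun i => if p.1 i = 0 then 0 else if i = p.2.2 ∨ 2 ≤ p.2.1 i then p.2.1 i else 0,
   fun i => if p.1 i = 0 then 0 else if i = p.2.2 ∨ 2 ≤ p.2.1 i then p.1 i - p.2.1 i else p.1 i,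
   p.2.2⟩

/-- For every `n` and every partition `λ ∈ S1 n` with overline designated summands,
`Δ λ ∈ S2 n`. -/
theorem delta_mem_S2 (n : ℕ) (l : (ℕ → ℕ) × (ℕ → ℕ) × ℕ) (hl : l ∈ S1 n) : delta l ∈ S2 n := by
  obtain ⟨hf0, hg0, hff, hgf, hsum, hk1, hfk, hgle, hgz⟩ := hl
  have hxf : ∀ i, l.1 i = 0 → (delta l).1 i = 0 := by
    intro i hi; simp [delta, hi]
  have hyf : ∀ i, l.1 i = 0 → (delta l).2.1 i = 0 := by
    intro i hi; simp [delta, hi]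
  have hsum' : ∀ i, (delta l).1 i + (delta l).2.1 i = l.1 i := by
    intro i
    by_cases hi : l.1 i = 0
    · simp [delta, hi]
    · by_cases hc : i = l.2.2 ∨ 2 ≤ l.2.1 i
      · simp only [delta, if_neg hi, if_pos hc]
        exact Nat.add_sub_cancel' (hgle i (Nat.one_le_iff_ne_zero.mpr hi)).2
      · simp [delta, hi, hc]
  refine ⟨hxf 0 hf0, hyf 0 hf0, ?_, ?_, hk1, ?_, ?_, ?_⟩
  · exact hff.subset fun i hi => by
      simp only [Function.mem_support] at hi ⊢
      exact fun h => hi (hxf i h)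
  · exact hff.subset fun i hi => by
      simp only [Function.mem_support] at hi ⊢
      exact fun h => hi (hyf i h)
  · have hne : l.1 l.2.2 ≠ 0 := Nat.one_le_iff_ne_zero.mp hfk
    show 1 ≤ (delta l).1 l.2.2
    simp only [delta, if_neg hne, if_pos (Or.inl rfl)]
    exact (hgle _ hfk).1
  · intro i hik
    by_cases hi : l.1 i = 0
    · simp [delta, hi]
    · by_cases hc : 2 ≤ l.2.1 i
      · show (if l.1 i = 0 then 0 else if i = l.2.2 ∨ 2 ≤ l.2.1 i then l.2.1 i else 0) ≠ 1
        rw [if_neg hi, if_pos (Or.inr hc)]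
        omega
      · show (if l.1 i = 0 then 0 else if i = l.2.2 ∨ 2 ≤ l.2.1 i then l.2.1 i else 0) ≠ 1
        rw [if_neg hi, if_neg (by tauto)]
        omega
  · rw [← hsum]
    exact finsum_congr fun i => by rw [hsum' i]
end

section
/- For every natural number n and every triple (x, y, t) ∈ S2(n), the triple Δ'(x, y, t) belongs to S1(n), i.e., it is a partition of n with overline designated summands. -/
/-- The map `Δ'` sending `(x, y, t)` to `(f, g, t)`: if `x i = y i = 0` then
`f i = g i = 0`; if `i = t` or `x i ≥ 2` then `f i = x i + y i`, `g i = x i`;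
if `i ≠ t`, `x i = 0` (i.e. `x i ≤ 1`) and `y i ≥ 1`, then `f i = y i`, `g i = 1`. -/
def delta' (p : (ℕ → ℕ) × (ℕ → ℕ) × ℕ) : (ℕ → ℕ) × (ℕ → ℕ) × ℕ :=
  ⟨fun i => if p.1 i = 0 ∧ p.2.1 i = 0 then 0
            else if i = p.2.2 ∨ 2 ≤ p.1 i then p.1 i + p.2.1 i else p.2.1 i,
   fun i => if p.1 i = 0 ∧ p.2.1 i = 0 then 0
            else if i = p.2.2 ∨ 2 ≤ p.1 i then p.1 i else 1,
   p.2.2⟩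

/-- For every `n` and every triple `(x, y, t) ∈ S2 n`, `Δ' (x, y, t) ∈ S1 n`. -/
theorem delta'_mem_S1 (n : ℕ) (p : (ℕ → ℕ) × (ℕ → ℕ) × ℕ) (hp : p ∈ S2 n) : delta' p ∈ S1 n := by
  obtain ⟨x, y, t⟩ := p
  obtain ⟨hx0, hy0, hxf, hyf, ht1, hxt, hne1, hsum⟩ := hp
  simp only at hx0 hy0 hxf hyf ht1 hxt hne1 hsum
  have hf : ∀ i, (delta' (x, y, t)).1 i = x i + y i := by
    intro i
    simp only [delta']
    by_cases h0 : x i = 0 ∧ y i = 0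
    · simp [h0.1, h0.2]
    · rw [if_neg h0]
      by_cases h1 : i = t ∨ 2 ≤ x i
      · rw [if_pos h1]
      · rw [if_neg h1]
        push_neg at h1
        have : x i = 0 := by
          have := hne1 i h1.1
          omega
        omega
  refine ⟨?_, ?_, ?_, ?_, ?_, ht1, ?_, ?_, ?_⟩
  · rw [hf]; simp [hx0, hy0]
  · simp only [delta']
    rw [if_pos ⟨hx0, hy0⟩]
  · apply Set.Finite.subset (hxf.union hyf)
    intro i hi
    rw [Function.mem_support, hf i] at hi
    simp only [Set.mem_union, Function.mem_support]
    omega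
  · apply Set.Finite.subset (hxf.union hyf)
    intro i hi
    rw [Function.mem_support] at hi
    simp only [delta'] at hi
    by_cases h0 : x i = 0 ∧ y i = 0
    · rw [if_pos h0] at hi; exact absurd rfl hi
    · simp only [Set.mem_union, Function.mem_support]
      omega
  · rw [← hsum]
    exact finsum_congr fun i => by rw [hf]
  · show 1 ≤ (delta' (x, y, t)).1 t
    rw [hf]; omega
  · intro i hi
    rw [hf] at hi
    show 1 ≤ (delta' (x, y, t)).2.1 i ∧ (delta' (x, y, t)).2.1 i ≤ (delta' (x, y, t)).1 i
    rw [hf i]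
    simp only [delta']
    have h0 : ¬(x i = 0 ∧ y i = 0) := by omega
    rw [if_neg h0]
    by_cases h1 : i = t ∨ 2 ≤ x i
    · rw [if_pos h1]
      constructor
      · rcases h1 with h1 | h1
        · subst h1; exact hxt
        · omega
      · omega
    · rw [if_neg h1]
      push_neg at h1
      have : x i = 0 := by have := hne1 i h1.1; omega
      omega
  · intro i hi
    rw [hf] at hi
    show (delta' (x, y, t)).2.1 i = 0
    simp only [delta']
    have h0 : x i = 0 ∧ y i = 0 := by omega
    rw [if_pos h0]
end

section
/- For every natural number n, the map Δ is a bijection from S1(n) onto S2(n), with Δ' as a two-sided inverse (Δ'(Δ(λ)) = λ for all λ ∈ S1(n) and Δ(Δ'(σ)) = σ for all σ ∈ S2(n)); in particular #S1(n) = #S2(n). -/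
/-- `Δ` is a bijection from `S1 n` onto `S2 n` with two-sided inverse `Δ'`;
in particular `#S1 n = #S2 n`. -/
theorem delta_bijOn (n : ℕ) :
    Set.BijOn delta (S1 n) (S2 n) ∧
    (∀ l ∈ S1 n, delta' (delta l) = l) ∧
    (∀ p ∈ S2 n, delta (delta' p) = p) ∧
    (S1 n).ncard = (S2 n).ncard := by
  have hmap1 : ∀ l ∈ S1 n, delta l ∈ S2 n := by
    rintro ⟨f, g, k⟩ ⟨hf0, hg0, hfs, hgs, hsum, hk1, hfk, hgle, hgz⟩
    dsimp only at hf0 hg0 hfs hgs hsum hk1 hfk hgle hgz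
    refine ⟨?_, ?_, ?_, ?_, hk1, ?_, ?_, ?_⟩
    · simp [delta, hf0]
    · simp [delta, hf0]
    · refine hgs.subset fun i hi => ?_
      simp only [delta, Function.mem_support] at hi ⊢
      intro h; apply hi; simp [h]
    · refine hfs.subset fun i hi => ?_
      simp only [delta, Function.mem_support] at hi ⊢
      intro h; apply hi; simp [h]
    · have h1 : ¬ f k = 0 := by omega
      have h2 := (hgle k hfk).1
      simp only [delta, if_neg h1, if_pos (Or.inl rfl)]
      exact h2
    · intro i hik
      simp only [delta] at hik ⊢
      by_cases h0 : f i = 0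
      · simp [h0]
      · by_cases hc : i = k ∨ 2 ≤ g i
        · simp only [if_neg h0, if_pos hc]
          rcases hc with hc | hc
          · exact absurd hc hik
          · omega
        · simp [h0, hc]
    · rw [← hsum]
      refine finsum_congr fun i => ?_
      have h1 := hgle i
      congr 1
      simp only [delta]
      split_ifs <;> omega
  have hmap2 : ∀ p ∈ S2 n, delta' p ∈ S1 n := by
    rintro ⟨x, y, t⟩ ⟨hx0, hy0, hxs, hys, ht1, hxt, hx1, hsum⟩
    dsimp only at hx0 hy0 hxs hys ht1 hxt hx1 hsum
    have hfxy : ∀ i, (delta' (x, y, t)).1 i = x i + y i := by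
      intro i
      simp only [delta']
      by_cases h0 : x i = 0 ∧ y i = 0
      · simp [h0.1, h0.2]
      · by_cases hc : i = t ∨ 2 ≤ x i
        · simp [h0, hc]
        · have hxi : x i = 0 := by
            have := hx1 i (fun h => hc (Or.inl h)); omega
          have hyi : ¬ y i = 0 := fun h => h0 ⟨hxi, h⟩
          simp [hc, hxi, hyi]
    refine ⟨?_, ?_, ?_, ?_, ?_, ht1, ?_, ?_, ?_⟩
    · simp [delta', hx0, hy0]
    · simp [delta', hx0, hy0]
    · refine (hxs.union hys).subset fun i hi => ?_
      simp only [Function.mem_support, Set.mem_union] at hi ⊢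
      rw [hfxy] at hi; omega
    · refine (hxs.union hys).subset fun i hi => ?_
      simp only [delta', Function.mem_support, Set.mem_union] at hi ⊢
      by_contra h
      push_neg at h
      apply hi
      simp [h.1, h.2]
    · rw [← hsum]
      exact finsum_congr fun i => by rw [hfxy]
    · rw [show (delta' (x, y, t)).2.2 = t from rfl, hfxy]; omega
    · intro i hfi
      rw [hfxy] at hfi
      have h0 : ¬ (x i = 0 ∧ y i = 0) := by omega
      simp only [delta', if_neg h0, hfxy]
      by_cases hc : i = t ∨ 2 ≤ x i
      · simp only [if_pos hc]
        rcases hc with hc | hc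
        · subst hc; omega
        · omega
      · have hxi : x i = 0 := by
          have := hx1 i (fun h => hc (Or.inl h)); omega
        simp only [if_neg hc]; omega
    · intro i hfi
      rw [hfxy] at hfi
      simp [delta', show x i = 0 ∧ y i = 0 by omega]
  have hleft : ∀ l ∈ S1 n, delta' (delta l) = l := by
    rintro ⟨f, g, k⟩ ⟨hf0, hg0, hfs, hgs, hsum, hk1, hfk, hgle, hgz⟩
    dsimp only at hf0 hg0 hfs hgs hsum hk1 hfk hgle hgz
    simp only [delta, delta', Prod.mk.injEq]
    refine ⟨funext fun i => ?_, funext fun i => ?_, trivial⟩ <;>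
    · have h1 := hgle i
      have h2 := hgz i
      split_ifs <;> omega
  have hright : ∀ p ∈ S2 n, delta (delta' p) = p := by
    rintro ⟨x, y, t⟩ ⟨hx0, hy0, hxs, hys, ht1, hxt, hx1, hsum⟩
    dsimp only at hx0 hy0 hxs hys ht1 hxt hx1 hsum
    simp only [delta, delta', Prod.mk.injEq]
    refine ⟨funext fun i => ?_, funext fun i => ?_, trivial⟩ <;>
    · have h1 := hx1 i
      split_ifs <;> omega
  have hbij : Set.BijOn delta (S1 n) (S2 n) :=
    Set.InvOn.bijOn ⟨hleft, hright⟩ hmap1 hmap2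
  exact ⟨hbij, hleft, hright, by
    rw [← hbij.image_eq, Set.ncard_image_of_injOn hbij.injOn]⟩
end

section
/- For every natural number n, the map ϕ_3 sending (f, g, k) ∈ A_3(n) to (f, g', k), where g'(k) = g(k) + 1 and g'(i) = g(i) for all i ≠ k, is a bijection from A_3(n) onto B_3(n); in particular #A_3(n) = #B_3(n). -/
/-- `A3 n`: `(f,g,k) ∈ S1 n` with `f 1 = g 1 = 1`, `k ≠ 1`, `f k ≥ 2`, `g k = f k - 1`,
and `f i = g i ≠ 1` for all `i ∉ {1, k}`. -/
def A3 (n : ℕ) : Set ((ℕ → ℕ) × (ℕ → ℕ) × ℕ) :=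
  {p ∈ S1 n | p.1 1 = 1 ∧ p.2.1 1 = 1 ∧ p.2.2 ≠ 1 ∧ 2 ≤ p.1 p.2.2 ∧
    p.2.1 p.2.2 = p.1 p.2.2 - 1 ∧ (∀ i, i ≠ 1 → i ≠ p.2.2 → p.1 i = p.2.1 i ∧ p.1 i ≠ 1)}

/-- `B3 n`: `(f,g,k) ∈ S1 n` with `f 1 = g 1 = 1`, `f i = g i ≠ 1` for all `i ≠ 1`,
and `k ≠ 1`. -/
def B3 (n : ℕ) : Set ((ℕ → ℕ) × (ℕ → ℕ) × ℕ) :=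
  {p ∈ S1 n | p.1 1 = 1 ∧ p.2.1 1 = 1 ∧ (∀ i, i ≠ 1 → p.1 i = p.2.1 i ∧ p.1 i ≠ 1) ∧
    p.2.2 ≠ 1}

/-- `ϕ₃ : (f, g, k) ↦ (f, g', k)` with `g' k = g k + 1` and `g' i = g i` for `i ≠ k`,
is a bijection from `A3 n` onto `B3 n`; in particular `#A3 n = #B3 n`. -/
theorem phi3_bijOn (n : ℕ) :
    Set.BijOn (fun p : (ℕ → ℕ) × (ℕ → ℕ) × ℕ => (p.1, Function.update p.2.1 p.2.2 (p.2.1 p.2.2 + 1), p.2.2))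
      (A3 n) (B3 n) ∧ (A3 n).ncard = (B3 n).ncard := by
  have hbij : Set.BijOn (fun p : (ℕ → ℕ) × (ℕ → ℕ) × ℕ =>
      (p.1, Function.update p.2.1 p.2.2 (p.2.1 p.2.2 + 1), p.2.2)) (A3 n) (B3 n) := by
    constructor
    · rintro ⟨f, g, k⟩ ⟨⟨hf0, hg0, hfs, hgs, hsum, hk1, hfk, hbd, hz⟩,
        hf1, hg1, hkne, hfk2, hgk, hrest⟩
      dsimp only at *
      have hk0 : k ≠ 0 := by omega
      refine ⟨⟨hf0, ?_, hfs, ?_, hsum, hk1, hfk, ?_, ?_⟩, hf1, ?_, ?_, hkne⟩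
      · simp [Function.update_of_ne (Ne.symm hk0), hg0]
      · apply ((hgs.union (Set.finite_singleton k)).subset)
        intro i hi
        rcases eq_or_ne i k with rfl | hik
        · exact Or.inr rfl
        · simp only [Function.mem_support, Function.update_of_ne hik] at hi
          exact Or.inl hi
      · intro i hi
        rcases eq_or_ne i k with rfl | hik
        · simp only [Function.update_self]
          omega
        · simp only [Function.update_of_ne hik]
          exact hbd i hi
      · intro i hi
        dsimp only at hi ⊢
        rcases eq_or_ne i k with rfl | hik
        · omega
        · simp only [Function.update_of_ne hik]
          exact hz i hi
      · simpa [Function.update_of_ne (Ne.symm hkne)] using hg1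
      · intro i hi
        rcases eq_or_ne i k with rfl | hik
        · simp only [Function.update_self]
          constructor
          · omega
          · omega
        · simp only [Function.update_of_ne hik]
          exact hrest i hi hik
    constructor
    · rintro ⟨f, g, k⟩ ⟨⟨hf0, hg0, hfs, hgs, hsum, hk1, hfk, hbd, hz⟩,
        hf1, hg1, hkne, hfk2, hgk, hrest⟩
        ⟨f', g', k'⟩ ⟨⟨hf0', hg0', hfs', hgs', hsum', hk1', hfk', hbd', hz'⟩,
        hf1', hg1', hkne', hfk2', hgk', hrest'⟩ heq
      dsimp only at *
      simp only [Prod.mk.injEq] at heq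
      obtain ⟨hfeq, hgeq, hkeq⟩ := heq
      subst hfeq; subst hkeq
      refine Prod.ext rfl (Prod.ext ?_ rfl)
      funext i
      have := congrFun hgeq i
      rcases eq_or_ne i k with rfl | hik
      · simp only [Function.update_self] at this
        show g i = g' i
        omega
      · simpa [Function.update_of_ne hik] using this
    · rintro ⟨f, g, k⟩ ⟨⟨hf0, hg0, hfs, hgs, hsum, hk1, hfk, hbd, hz⟩,
        hf1, hg1, hrest, hkne⟩
      dsimp only at *
      have hk0 : k ≠ 0 := by omega
      have hfkgk : f k = g k := (hrest k hkne).1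
      have hfkne1 : f k ≠ 1 := (hrest k hkne).2
      have hfk2 : 2 ≤ f k := by omega
      refine ⟨⟨f, Function.update g k (g k - 1), k⟩,
        ⟨⟨hf0, ?_, hfs, ?_, hsum, hk1, hfk, ?_, ?_⟩, hf1, ?_, hkne, hfk2,
          by simp [hfkgk], ?_⟩, ?_⟩
      · simp [Function.update_of_ne (Ne.symm hk0), hg0]
      · apply (hgs.subset)
        intro i hi
        rcases eq_or_ne i k with rfl | hik
        · simp only [Function.mem_support, Function.update_self] at *
          omega
        · simpa [Function.update_of_ne hik] using hi
      · intro i hi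
        rcases eq_or_ne i k with rfl | hik
        · simp only [Function.update_self]
          omega
        · simp only [Function.update_of_ne hik]
          exact hbd i hi
      · intro i hi
        dsimp only at hi ⊢
        rcases eq_or_ne i k with rfl | hik
        · omega
        · simp only [Function.update_of_ne hik]
          exact hz i hi
      · simp [Function.update_of_ne (Ne.symm hkne), hg1]
      · intro i hi hik
        simp only [Function.update_of_ne hik]
        exact hrest i hi
      · refine Prod.ext rfl (Prod.ext ?_ rfl)
        dsimp only
        funext i
        rcases eq_or_ne i k with rfl | hik
        · simp only [Function.update_self]
          omega
        · simp [Function.update_of_ne hik]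
  refine ⟨hbij, ?_⟩
  calc (A3 n).ncard = _ := (Set.ncard_image_of_injOn hbij.injOn).symm
    _ = (B3 n).ncard := by rw [hbij.image_eq]
end

section
/- For every natural number n, the map ϕ_4 sending (f, g, k) ∈ A_4(n) to (f, g, j), where j is the unique index j ≠ 1 with f(j) = g(j) = 1, is a well-defined map from A_4(n) into B_4(n), and it is surjective onto B_4(n). -/
/-- `A4 n`: `(f,g,k) ∈ S1 n` with `f 1 = g 1 = 1`, `k ≠ 1`, `f k = g k ≥ 2`,
`f i = g i` for all `i`, and exactly one index `j ≠ 1` with `f j = g j = 1`. -/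
def A4 (n : ℕ) : Set ((ℕ → ℕ) × (ℕ → ℕ) × ℕ) :=
  {p ∈ S1 n | p.1 1 = 1 ∧ p.2.1 1 = 1 ∧ p.2.2 ≠ 1 ∧ p.1 p.2.2 = p.2.1 p.2.2 ∧
    2 ≤ p.1 p.2.2 ∧ (∀ i, p.1 i = p.2.1 i) ∧ (∃! j, j ≠ 1 ∧ p.1 j = 1 ∧ p.2.1 j = 1)}

/-- `B4 n`: `(f,g,k) ∈ S1 n` with `f 1 = g 1 = 1`, `k ≠ 1`, `f k = g k = 1`,
`f i = g i ≠ 1` for all `i ∉ {1, k}`, and some `j ∉ {1, k}` with `f j = g j ≥ 2`. -/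
def B4 (n : ℕ) : Set ((ℕ → ℕ) × (ℕ → ℕ) × ℕ) :=
  {p ∈ S1 n | p.1 1 = 1 ∧ p.2.1 1 = 1 ∧ p.2.2 ≠ 1 ∧ p.1 p.2.2 = 1 ∧ p.2.1 p.2.2 = 1 ∧
    (∀ i, i ≠ 1 → i ≠ p.2.2 → p.1 i = p.2.1 i ∧ p.1 i ≠ 1) ∧
    (∃ j, j ≠ 1 ∧ j ≠ p.2.2 ∧ p.1 j = p.2.1 j ∧ 2 ≤ p.1 j)}

/-- `ϕ₄ : (f, g, k) ↦ (f, g, j)`, where `j` is the unique index `j ≠ 1` with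
`f j = g j = 1`, is a well-defined map from `A4 n` into `B4 n` and is surjective
onto `B4 n`. -/
theorem phi4_into_and_surjective (n : ℕ) :
    (∀ l ∈ A4 n, ∃! j, j ≠ 1 ∧ l.1 j = 1 ∧ l.2.1 j = 1) ∧
    (∀ l ∈ A4 n, ∀ j, (j ≠ 1 ∧ l.1 j = 1 ∧ l.2.1 j = 1) → (l.1, l.2.1, j) ∈ B4 n) ∧
    (∀ p ∈ B4 n, ∃ l ∈ A4 n, ∃ j, (j ≠ 1 ∧ l.1 j = 1 ∧ l.2.1 j = 1) ∧
      p = (l.1, l.2.1, j)) := by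

  refine ⟨?_, ?_, ?_⟩
  · rintro l ⟨_, _, _, _, _, _, _, huniq⟩
    exact huniq
  · rintro ⟨f, g, k⟩ ⟨⟨hf0, hg0, hfin, hgin, hsum, hk1le, hfk1, hbnd, hz⟩,
      h1, h1', hkne1, hfgk, h2le, hall, j0, ⟨hj0ne, hfj0, hgj0⟩, huniq⟩ j ⟨hj1, hfj, hgj⟩
    have hjj0 : j = j0 := huniq j ⟨hj1, hfj, hgj⟩
    have hj0z : j ≠ 0 := fun h => by rw [h, hf0] at hfj; omega
    refine ⟨⟨hf0, hg0, hfin, hgin, hsum, Nat.one_le_iff_ne_zero.mpr hj0z, le_of_eq hfj.symm,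
      hbnd, hz⟩, h1, h1', hj1, hfj, hgj, ?_, k, hkne1, ?_, hfgk, h2le⟩
    · intro i hi1 hij
      refine ⟨hall i, fun hfi => ?_⟩
      have : i = j0 := huniq i ⟨hi1, hfi, (hall i).symm.trans hfi⟩
      exact hij (this.trans hjj0.symm)
    · intro hkj
      rw [hkj, hfj] at h2le; omega
  · rintro ⟨f, g, k⟩ ⟨⟨hf0, hg0, hfin, hgin, hsum, hk1, hfk, hbnd, hz⟩,
      h1, h1', hkne1, hfk1, hgk1, hall, j, hjne1, hjnek, hfgj, h2j⟩
    have hj0 : j ≠ 0 := fun h => by rw [h, hf0] at h2j; omega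
    refine ⟨(f, g, j), ⟨⟨hf0, hg0, hfin, hgin, hsum, Nat.one_le_iff_ne_zero.mpr hj0,
      le_trans one_le_two h2j, hbnd, hz⟩, h1, h1', hjne1, hfgj, h2j, ?_, k, ⟨hkne1, hfk1, hgk1⟩, ?_⟩,
      k, ⟨hkne1, hfk1, hgk1⟩, rfl⟩
    · intro i
      by_cases hi1 : i = 1
      · rw [hi1, h1, h1']
      · by_cases hik : i = k
        · rw [hik, hfk1, hgk1]
        · exact (hall i hi1 hik).1
    · rintro y ⟨hy1, hfy, hgy⟩
      by_cases hyk : y = k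
      · exact hyk
      · exact absurd hfy (hall y hy1 hyk).2
end

section
/- For every natural number n, the set of partitions λ ∈ S1(n) with overline designated summands whose Δ-image has β-component equal to the partition (1) (i.e., y_λ(1) = 1 and y_λ(i) = 0 for all i ≥ 2) is exactly the union B_1(n) ∪ B_2(n) ∪ B_3(n) ∪ B_4(n) ∪ B_5(n), and the five sets B_1(n), ..., B_5(n) are pairwise disjoint. -/
/-- `y` is the multiplicity function of the partition `(1)` with a single part equal to 1. -/
def isPartitionOne (y : ℕ → ℕ) : Prop := y 1 = 1 ∧ ∀ i, 2 ≤ i → y i = 0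

/-- `B1 n`: `(f,g,k) ∈ S1 n` with `f i = g i` for all `i ≠ 1`, `k ≠ 1`, `f 1 ≥ 3`,
`g 1 = f 1 - 1`, and `f i ≠ 1` for all `i ∉ {1, k}`. -/
def B1 (n : ℕ) : Set ((ℕ → ℕ) × (ℕ → ℕ) × ℕ) :=
  {p ∈ S1 n | (∀ i, i ≠ 1 → p.1 i = p.2.1 i) ∧ p.2.2 ≠ 1 ∧ 3 ≤ p.1 1 ∧
    p.2.1 1 = p.1 1 - 1 ∧ (∀ i, i ≠ 1 → i ≠ p.2.2 → p.1 i ≠ 1)}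

/-- `B2 n`: `(f,g,k) ∈ S1 n` with `f i = g i ≠ 1` for all `i ≠ 1`, `k = 1`, `f 1 ≥ 2`
and `g 1 = f 1 - 1`. -/
def B2 (n : ℕ) : Set ((ℕ → ℕ) × (ℕ → ℕ) × ℕ) :=
  {p ∈ S1 n | (∀ i, i ≠ 1 → p.1 i = p.2.1 i ∧ p.1 i ≠ 1) ∧ p.2.2 = 1 ∧ 2 ≤ p.1 1 ∧
    p.2.1 1 = p.1 1 - 1}

/-- `B5 n`: `(f,g,k) ∈ S1 n` with `k ≠ 1`, `f k = g k = 1`, `f 1 = g 1 = 1` and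
`f i = 0` for all `i ∉ {1, k}`. -/
def B5 (n : ℕ) : Set ((ℕ → ℕ) × (ℕ → ℕ) × ℕ) :=
  {p ∈ S1 n | p.2.2 ≠ 1 ∧ p.1 p.2.2 = 1 ∧ p.2.1 p.2.2 = 1 ∧ p.1 1 = 1 ∧ p.2.1 1 = 1 ∧
    ∀ i, i ≠ 1 → i ≠ p.2.2 → p.1 i = 0}

/-! The `β`-component `y` of `Δ(f, g, k)` vanishes at `i` exactly when `f i = g i` and,
unless `i = k`, `f i ≠ 1`; and `y 1 = 1` happens in exactly three ways: `k ≠ 1` with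
`g 1 = f 1 - 1 ≥ 2`, `k = 1` with `g 1 = f 1 - 1`, or `k ≠ 1` with `f 1 = g 1 = 1`.
Each `Bⱼ` is the vanishing of `y` off `1` together with one of these, the last one split
further according to whether `f k = 1` and whether parts other than `1` and `k` occur. -/

variable {n : ℕ} {p : (ℕ → ℕ) × (ℕ → ℕ) × ℕ}

lemma delta_snd_eq_zero_iff {i : ℕ} (hfg : 1 ≤ p.1 i → 1 ≤ p.2.1 i ∧ p.2.1 i ≤ p.1 i)
    (hgz : p.1 i = 0 → p.2.1 i = 0) :
    (delta p).2.1 i = 0 ↔ p.1 i = p.2.1 i ∧ (i ≠ p.2.2 → p.1 i ≠ 1) := by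
  simp only [delta]
  split_ifs <;> grind

lemma delta_snd_eq_one_iff {i : ℕ} (hfg : 1 ≤ p.1 i → 1 ≤ p.2.1 i ∧ p.2.1 i ≤ p.1 i) :
    (delta p).2.1 i = 1 ↔ (p.2.2 ≠ i ∧ 3 ≤ p.1 i ∧ p.2.1 i = p.1 i - 1) ∨
      (p.2.2 = i ∧ 2 ≤ p.1 i ∧ p.2.1 i = p.1 i - 1) ∨
      (p.2.2 ≠ i ∧ p.1 i = 1 ∧ p.2.1 i = 1) := by
  simp only [delta]
  split_ifs <;> grind

lemma isPartitionOne_iff {y : ℕ → ℕ} (h0 : y 0 = 0) :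
    isPartitionOne y ↔ y 1 = 1 ∧ ∀ i, i ≠ 1 → y i = 0 := by
  refine and_congr_right fun _ => ⟨fun h i hi => ?_, fun h i hi => h i (by omega)⟩
  rcases Nat.lt_or_ge i 2 with hi2 | hi2
  · obtain rfl : i = 0 := by omega
    exact h0
  · exact h i hi2

lemma delta_snd_zero_of_mem_S1 (hp : p ∈ S1 n) : (delta p).2.1 0 = 0 := by
  simp [delta, hp.1]

lemma delta_snd_eq_zero_iff_of_mem_S1 (hp : p ∈ S1 n) (i : ℕ) :
    (delta p).2.1 i = 0 ↔ p.1 i = p.2.1 i ∧ (i ≠ p.2.2 → p.1 i ≠ 1) := by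
  obtain ⟨-, -, -, -, -, -, -, hfg, hgz⟩ := hp
  exact delta_snd_eq_zero_iff (hfg i) (hgz i)

lemma delta_snd_one_eq_one_iff_of_mem_S1 (hp : p ∈ S1 n) :
    (delta p).2.1 1 = 1 ↔ (p.2.2 ≠ 1 ∧ 3 ≤ p.1 1 ∧ p.2.1 1 = p.1 1 - 1) ∨
      (p.2.2 = 1 ∧ 2 ≤ p.1 1 ∧ p.2.1 1 = p.1 1 - 1) ∨
      (p.2.2 ≠ 1 ∧ p.1 1 = 1 ∧ p.2.1 1 = 1) := by
  obtain ⟨-, -, -, -, -, -, -, hfg, -⟩ := hp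
  exact delta_snd_eq_one_iff (hfg 1)

lemma mem_B1_iff (hp : p ∈ S1 n) : p ∈ B1 n ↔ (∀ i, i ≠ 1 → (delta p).2.1 i = 0) ∧
    p.2.2 ≠ 1 ∧ 3 ≤ p.1 1 ∧ p.2.1 1 = p.1 1 - 1 := by
  simp only [B1, Set.mem_sep_iff, delta_snd_eq_zero_iff_of_mem_S1 hp, imp_and,
    forall_and, true_and, hp]
  grind

lemma mem_B2_iff (hp : p ∈ S1 n) : p ∈ B2 n ↔ (∀ i, i ≠ 1 → (delta p).2.1 i = 0) ∧
    p.2.2 = 1 ∧ 2 ≤ p.1 1 ∧ p.2.1 1 = p.1 1 - 1 := by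
  simp only [B2, Set.mem_sep_iff, delta_snd_eq_zero_iff_of_mem_S1 hp, imp_and,
    forall_and, true_and, hp]
  grind

lemma mem_B3_iff (hp : p ∈ S1 n) : p ∈ B3 n ↔ (∀ i, i ≠ 1 → (delta p).2.1 i = 0) ∧
    p.2.2 ≠ 1 ∧ p.1 1 = 1 ∧ p.2.1 1 = 1 ∧ p.1 p.2.2 ≠ 1 := by
  simp only [B3, Set.mem_sep_iff, delta_snd_eq_zero_iff_of_mem_S1 hp, imp_and,
    forall_and, true_and, hp]
  grind

lemma mem_B4_iff (hp : p ∈ S1 n) : p ∈ B4 n ↔ (∀ i, i ≠ 1 → (delta p).2.1 i = 0) ∧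
    p.2.2 ≠ 1 ∧ p.1 1 = 1 ∧ p.2.1 1 = 1 ∧ p.1 p.2.2 = 1 ∧
    ∃ j, j ≠ 1 ∧ j ≠ p.2.2 ∧ p.1 j ≠ 0 := by
  simp only [B4, Set.mem_sep_iff, delta_snd_eq_zero_iff_of_mem_S1 hp, imp_and,
    forall_and, true_and, hp]
  grind

lemma mem_B5_iff (hp : p ∈ S1 n) : p ∈ B5 n ↔ (∀ i, i ≠ 1 → (delta p).2.1 i = 0) ∧
    p.2.2 ≠ 1 ∧ p.1 1 = 1 ∧ p.2.1 1 = 1 ∧ p.1 p.2.2 = 1 ∧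
    ∀ j, j ≠ 1 → j ≠ p.2.2 → p.1 j = 0 := by
  simp only [B5, Set.mem_sep_iff, delta_snd_eq_zero_iff_of_mem_S1 hp, imp_and,
    forall_and, true_and, hp]
  obtain ⟨-, -, -, -, -, -, -, -, hgz⟩ := hp
  grind

lemma pairwise_disjoint_B (n : ℕ) : List.Pairwise Disjoint [B1 n, B2 n, B3 n, B4 n, B5 n] := by
  simp only [List.pairwise_cons, List.mem_cons, List.not_mem_nil, or_false, forall_eq_or_imp,
    forall_eq, List.Pairwise.nil, and_true, false_implies, implies_true, Set.disjoint_left]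
  refine ⟨⟨?_, ?_, ?_, ?_⟩, ⟨?_, ?_, ?_⟩, ⟨?_, ?_⟩, ?_⟩ <;>
    rintro p ⟨-, h⟩ ⟨-, h'⟩ <;> grind

/-- The set of `λ ∈ S1 n` whose `Δ`-image has `β`-component equal to the partition `(1)`
is exactly `B1 n ∪ B2 n ∪ B3 n ∪ B4 n ∪ B5 n`, and the `Bᵢ n` are pairwise disjoint. -/
theorem B_decomposition (n : ℕ) :
    {p ∈ S1 n | isPartitionOne (delta p).2.1} = B1 n ∪ B2 n ∪ B3 n ∪ B4 n ∪ B5 n ∧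
    List.Pairwise Disjoint [B1 n, B2 n, B3 n, B4 n, B5 n] := by
  refine ⟨Set.ext fun p => ?_, pairwise_disjoint_B n⟩
  by_cases hp : p ∈ S1 n
  · simp only [Set.mem_union, Set.mem_sep_iff, hp, true_and,
      isPartitionOne_iff (delta_snd_zero_of_mem_S1 hp), delta_snd_one_eq_one_iff_of_mem_S1 hp,
      mem_B1_iff hp, mem_B2_iff hp, mem_B3_iff hp, mem_B4_iff hp, mem_B5_iff hp]
    by_cases hrest : ∀ j, j ≠ 1 → j ≠ p.2.2 → p.1 j = 0 <;> grind
  · simp [hp, B1, B2, B3, B4, B5]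
end

section
/- For every natural number n and every λ in A(n) = A_1(n) ∪ A_2(n) ∪ A_3(n) ∪ A_4(n) ∪ A_5(n), the β-component β_λ of Δ(λ) is not the partition (1) and has crank equal to 0 (i.e., the pdt-rank of λ is 0). -/
/-- The crank of the partition whose multiplicity function is `y` (the partition has
`y i` parts equal to `i`): if `n₁ = y 1 = 0` it is the largest part (`0` for the empty
partition), otherwise it is `μ - n₁` where `μ = ∑_{i > n₁} y i` is the number of parts
larger than `n₁`. -/
noncomputable def crank (y : ℕ → ℕ) : ℤ :=
  if y 1 = 0 then ((sSup (Function.support y) : ℕ) : ℤ)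
  else ((∑ᶠ i, if y 1 < i then y i else 0 : ℕ) : ℤ) - (y 1 : ℤ)

/-- `A1 n`: `(f,g,k) ∈ S1 n` with `f i = g i` for all `i`, `f i ≠ 1` for all `i ≠ k`,
`k ≠ 1` and `f 1 ≥ 3`. -/
def A1 (n : ℕ) : Set ((ℕ → ℕ) × (ℕ → ℕ) × ℕ) :=
  {p ∈ S1 n | (∀ i, p.1 i = p.2.1 i) ∧ (∀ i, i ≠ p.2.2 → p.1 i ≠ 1) ∧ p.2.2 ≠ 1 ∧ 3 ≤ p.1 1}

/-- `A2 n`: `(f,g,k) ∈ S1 n` with `f i = g i ≠ 1` for all `i`, `k = 1` and `f 1 ≥ 2`. -/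
def A2 (n : ℕ) : Set ((ℕ → ℕ) × (ℕ → ℕ) × ℕ) :=
  {p ∈ S1 n | (∀ i, p.1 i = p.2.1 i ∧ p.1 i ≠ 1) ∧ p.2.2 = 1 ∧ 2 ≤ p.1 1}

/-- `A5 n`: `(f,g,k) ∈ S1 n` with `k ≠ 1`, `f k = g k = 1` and `f i = 0` for all `i ≠ k`. -/
def A5 (n : ℕ) : Set ((ℕ → ℕ) × (ℕ → ℕ) × ℕ) :=
  {p ∈ S1 n | p.2.2 ≠ 1 ∧ p.1 p.2.2 = 1 ∧ p.2.1 p.2.2 = 1 ∧ ∀ i, i ≠ p.2.2 → p.1 i = 0}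


lemma aux_zero (y : ℕ → ℕ) (h : ∀ i, y i = 0) : ¬ isPartitionOne y ∧ crank y = 0 := by
  constructor
  · rintro ⟨h1, _⟩
    rw [h 1] at h1
    exact one_ne_zero h1.symm
  · have hs : Function.support y = ∅ := by
      ext i; simp [h i]
    simp [crank, h 1, hs]

lemma aux_two (y : ℕ → ℕ) (j : ℕ) (hj : 2 ≤ j) (h1 : y 1 = 1) (hjv : y j = 1)
    (h0 : ∀ i, i ≠ 1 → i ≠ j → y i = 0) : ¬ isPartitionOne y ∧ crank y = 0 := by
  constructor
  · rintro ⟨_, h2⟩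
    have := h2 j hj
    rw [hjv] at this
    exact one_ne_zero this
  · have hsum : (∑ᶠ i, if 1 < i then y i else 0) = 1 := by
      rw [finsum_eq_single _ j]
      · rw [if_pos (by omega), hjv]
      · intro x hx
        rcases eq_or_ne x 1 with rfl | hx1
        · simp [h1]
        · simp [h0 x hx1 hx]
    simp [crank, h1, hsum]

/-- Every `λ ∈ A n = A1 n ∪ ⋯ ∪ A5 n` has `β_λ ≠ (1)` and `crank β_λ = 0`, i.e. the
pdt-rank of `λ` is `0`. -/
theorem A_rank_zero (n : ℕ) (l : (ℕ → ℕ) × (ℕ → ℕ) × ℕ)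
    (hl : l ∈ A1 n ∪ A2 n ∪ A3 n ∪ A4 n ∪ A5 n) :
    ¬ isPartitionOne (delta l).2.1 ∧ crank (delta l).2.1 = 0 := by
  rcases hl with ((((h | h) | h) | h) | h)
  · -- A1
    obtain ⟨hS, heq, hne1, hk1, hf1⟩ := h
    apply aux_zero
    intro i
    have hgi := heq i
    by_cases hf : l.1 i = 0
    · simp [delta, hf]
    · rcases eq_or_ne i l.2.2 with rfl | hik
      · simp only [delta]
        rw [if_neg hf, if_pos (Or.inl trivial)]
        omega
      · have hne := hne1 i hik
        have hg : 2 ≤ l.2.1 i := by omega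
        simp only [delta]
        rw [if_neg hf, if_pos (Or.inr hg)]
        omega
  · -- A2
    obtain ⟨hS, heq, hk, hf1⟩ := h
    apply aux_zero
    intro i
    obtain ⟨hgi, hni⟩ := heq i
    by_cases hf : l.1 i = 0
    · simp [delta, hf]
    · have hg : 2 ≤ l.2.1 i := by omega
      simp only [delta]
      rw [if_neg hf, if_pos (Or.inr hg)]
      omega
  · -- A3
    obtain ⟨hS, hf1, hg1, hk1, hfk, hgk, hrest⟩ := h
    have hk2 : 2 ≤ l.2.2 := by
      have := hS.2.2.2.2.2.1
      omega
    apply aux_two _ l.2.2 hk2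
    · simp only [delta]
      rw [if_neg (by omega), if_neg (by push_neg; exact ⟨Ne.symm hk1, by omega⟩)]
      exact hf1
    · simp only [delta]
      rw [if_neg (by omega), if_pos (Or.inl trivial)]
      omega
    · intro i hi1 hik
      obtain ⟨hgi, hni⟩ := hrest i hi1 hik
      by_cases hf : l.1 i = 0
      · simp [delta, hf]
      · have hg : 2 ≤ l.2.1 i := by omega
        simp only [delta]
        rw [if_neg hf, if_pos (Or.inr hg)]
        omega
  · -- A4
    obtain ⟨hS, hf1, hg1, hk1, hfgk, hfk2, heq, j, ⟨hj1, hfj, hgj⟩, huniq⟩ := h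
    have hj0 : j ≠ 0 := by
      intro h0
      rw [h0, hS.1] at hfj
      exact one_ne_zero hfj.symm
    have hj2 : 2 ≤ j := by omega
    have hjk : j ≠ l.2.2 := by
      intro h0
      rw [h0] at hfj
      omega
    apply aux_two _ j hj2
    · simp only [delta]
      rw [if_neg (by omega), if_neg (by push_neg; exact ⟨Ne.symm hk1, by omega⟩)]
      exact hf1
    · simp only [delta]
      rw [if_neg (by omega), if_neg (by push_neg; exact ⟨hjk, by omega⟩)]
      exact hfj
    · intro i hi1 hij
      have hgi := heq i
      by_cases hf : l.1 i = 0
      · simp [delta, hf]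
      · rcases eq_or_ne i l.2.2 with rfl | hik
        · simp only [delta]
          rw [if_neg hf, if_pos (Or.inl trivial)]
          omega
        · have hni : l.1 i ≠ 1 := by
            intro h1
            exact hij (huniq i ⟨hi1, h1, by omega⟩)
          have hg : 2 ≤ l.2.1 i := by omega
          simp only [delta]
          rw [if_neg hf, if_pos (Or.inr hg)]
          omega
  · -- A5
    obtain ⟨hS, hk1, hfk, hgk, hrest⟩ := h
    apply aux_zero
    intro i
    rcases eq_or_ne i l.2.2 with rfl | hik
    · simp only [delta]
      rw [if_neg (by omega), if_pos (Or.inl trivial)]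
      omega
    · simp [delta, hrest i hik]
end
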